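/- For every integer k ≥ 1 there exists an integer σ_0 ≥ 1 such that for all σ ≥ σ_0, for every and/or tree shape t of saturation level at least σ, and for all distinct points a, b ∈ {True,False}^k, the probability that the uniform random k-labelling t̂ of t satisfies f[t̂](a) = True and f[t̂](b) = False is at most 2/σ. -/

import Mathlib

/-- A plane rooted tree (shape of an and/or tree). -/
inductive PTree where
  | leaf : PTree
  | node : List PTree → PTree

/-- An and/or tree shape: every internal node has at least two children. -/
inductive IsShape : PTree → Prop
  | leaf : IsShape .leaf
  | node (cs : List PTree) : 2 ≤ cs.length → (∀ c ∈ cs, IsShape c) → IsShape (.node cs)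

/-- The size of a shape: its number of leaves. -/
def PTree.size : PTree → ℕ
  | .leaf => 1
  | .node cs => (cs.attach.map (fun ⟨c, _⟩ => c.size)).sum
decreasing_by
  have := List.sizeOf_lt_of_mem ‹c ∈ cs›; simp only [PTree.node.sizeOf_spec]; omega

/-- The saturation level of a shape: the minimal depth of a leaf. -/
def PTree.satLevel : PTree → ℕ
  | .leaf => 0
  | .node cs => ((cs.attach.map (fun ⟨c, _⟩ => c.satLevel)).min?.getD 0) + 1
decreasing_by
  have := List.sizeOf_lt_of_mem ‹c ∈ cs›; simp only [PTree.node.sizeOf_spec]; omega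

/-- A `k`-labelled and/or tree: internal nodes carry a connective
(`true` = ∧, `false` = ∨), leaves carry a literal: a variable index in `Fin k`
together with a polarity (`true` = positive, `false` = negated). -/
inductive LTree (k : ℕ) where
  | leaf : Fin k → Bool → LTree k
  | node : Bool → List (LTree k) → LTree k

/-- Evaluation of a labelled and/or tree, with the convention that a childless
internal node labelled ∧ (resp. ∨) evaluates to `false` (resp. `true`). -/
def LTree.eval {k : ℕ} : LTree k → (Fin k → Bool) → Bool
  | .leaf i pos, x => if pos then x i else !(x i)
  | .node c cs, x =>
    if cs.isEmpty then !c
    else if c then (cs.attach.map (fun ⟨t, _⟩ => t.eval x)).all (fun b => b)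
    else (cs.attach.map (fun ⟨t, _⟩ => t.eval x)).any (fun b => b)
decreasing_by
  all_goals (have := List.sizeOf_lt_of_mem ‹t ∈ cs›; simp only [LTree.node.sizeOf_spec]; omega)

/-- A valid labelled and/or tree: every internal node has at least two children. -/
inductive IsLShape {k : ℕ} : LTree k → Prop
  | leaf (i : Fin k) (pos : Bool) : IsLShape (.leaf i pos)
  | node (c : Bool) (cs : List (LTree k)) : 2 ≤ cs.length →
      (∀ t ∈ cs, IsLShape t) → IsLShape (.node c cs)

/-- The size of a labelled tree: its number of leaves. -/
def LTree.size {k : ℕ} : LTree k → ℕ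
  | .leaf _ _ => 1
  | .node _ cs => (cs.attach.map (fun ⟨t, _⟩ => t.size)).sum
decreasing_by
  have := List.sizeOf_lt_of_mem ‹t ∈ cs›; simp only [LTree.node.sizeOf_spec]; omega

/-- The list of leaf labels of a labelled tree. -/
def LTree.leaves {k : ℕ} : LTree k → List (Fin k × Bool)
  | .leaf i pos => [(i, pos)]
  | .node _ cs => (cs.attach.map (fun ⟨t, _⟩ => t.leaves)).flatten
decreasing_by
  have := List.sizeOf_lt_of_mem ‹t ∈ cs›; simp only [LTree.node.sizeOf_spec]; omega

/-- The list of all `k`-labellings of a given shape (each one equally likely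
under the uniform random labelling). -/
def labellings (k : ℕ) : PTree → List (LTree k)
  | .leaf => (List.finRange k).flatMap (fun i => [LTree.leaf i true, LTree.leaf i false])
  | .node cs => [true, false].flatMap (fun c =>
      ((cs.attach.map (fun ⟨t, _⟩ => labellings k t)).sections).map (fun l => LTree.node c l))
decreasing_by
  have := List.sizeOf_lt_of_mem ‹t ∈ cs›; simp only [PTree.node.sizeOf_spec]; omega

open Classical in
/-- The probability that the uniform random `k`-labelling of the shape `t`
computes a Boolean function belonging to the set `s`. -/
noncomputable def Pr (k : ℕ) (t : PTree) (s : Set ((Fin k → Bool) → Bool)) : ℝ :=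
  (((labellings k t).filter (fun τ => decide (τ.eval ∈ s))).length : ℝ)
    / ((labellings k t).length : ℝ)

/-- `Pfun k t g` = `P_k[t](g)`: the probability that the uniform random
`k`-labelling of the shape `t` computes exactly the Boolean function `g`. -/
noncomputable def Pfun (k : ℕ) (t : PTree) (g : (Fin k → Bool) → Bool) : ℝ :=
  Pr k t {g}

/-- `x_i` is an essential variable of `f`. -/
def Essential {k : ℕ} (f : (Fin k → Bool) → Bool) (i : Fin k) : Prop :=
  ∃ x : Fin k → Bool, f (Function.update x i true) ≠ f (Function.update x i false)

open Classical in
/-- The number of essential variables of `f`. -/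
noncomputable def essCount {k : ℕ} (f : (Fin k → Bool) → Bool) : ℕ :=
  (Finset.univ.filter (fun i => Essential f i)).card

open Classical in
/-- The complexity `L(f)`: the minimal number of leaves of a valid `k`-labelled
and/or tree computing `f`, with the convention `L(True) = L(False) = 0`. -/
noncomputable def complexity (k : ℕ) (f : (Fin k → Bool) → Bool) : ℕ :=
  if f = (fun _ => true) ∨ f = (fun _ => false) then 0
  else sInf {n | ∃ τ : LTree k, IsLShape τ ∧ τ.eval = f ∧ τ.size = n}

/-!
Write `p(t)` for the probability that the random labelling of `t` is true at `a` and false at `b`;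
we show `p(t) * (satLevel t + 2) ≤ 1`. First, by induction every point is true with probability
`1/2`: an `∧`-node with `m` children is true with probability `2⁻ᵐ`, an `∨`-node with probability
`1 - 2⁻ᵐ`. At a node with `m ≥ 2` children, labelled independently, both connectives give
`p = 2⁻ᵐ - ∏ (1/2 - p(c))`. If `d` is the least saturation level of a child, then
`p(c) ≤ 1/(d+2)` bounds this by `2⁻ᵐ - vᵐ ≤ 1/4 - v²` with `v = 1/2 - 1/(d+2)`, and
`1/4 - v² = (d+1)/(d+2)² ≤ 1/(d+3)`.
-/

namespace List

variable {α : Type*}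

/-- The probability of `p` under the uniform distribution on `L` (`0` when `L = []`). -/
noncomputable def freq (L : List α) (p : α → Bool) : ℝ := L.countP p / L.length

theorem freq_nonneg (L : List α) (p : α → Bool) : 0 ≤ L.freq p := by
  unfold freq; positivity

theorem freq_congr {L : List α} {p q : α → Bool} (h : ∀ x ∈ L, p x = q x) :
    L.freq p = L.freq q := by
  rw [freq, freq, countP_congr fun x hx => by rw [h x hx]]

theorem freq_map {β : Type*} (L : List α) (f : α → β) (p : β → Bool) :
    (L.map f).freq p = L.freq (p ∘ f) := by
  simp [freq, countP_map]

theorem freq_append_of_length_eq {L₁ L₂ : List α} (h : L₁.length = L₂.length) (p : α → Bool) :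
    (L₁ ++ L₂).freq p = (L₁.freq p + L₂.freq p) / 2 := by
  simp only [freq, countP_append, length_append, h, Nat.cast_add]
  ring

theorem freq_and_add_freq_and_not (L : List α) (p q : α → Bool) :
    L.freq (fun x => p x && q x) + L.freq (fun x => p x && !q x) = L.freq p := by
  simp only [freq, ← add_div, ← Nat.cast_add]
  congr 2
  induction L with
  | nil => rfl
  | cons x L ih => cases hp : p x <;> cases hq : q x <;> simp [hp, hq] <;> omega

theorem freq_not {L : List α} (hL : L ≠ []) (p : α → Bool) :
    L.freq (fun x => !p x) = 1 - L.freq p := by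
  have hlen : (L.length : ℝ) ≠ 0 := by simpa using hL
  rw [freq, freq, eq_sub_iff_add_eq, ← add_div, div_eq_one_iff_eq hlen, ← Nat.cast_add,
    length_eq_countP_add_countP p, add_comm]
  simp

theorem ne_nil_of_freq_ne_zero {L : List α} {p : α → Bool} (h : L.freq p ≠ 0) : L ≠ [] := by
  rintro rfl; simp [freq] at h

theorem length_sections (Ls : List (List α)) : Ls.sections.length = (Ls.map length).prod := by
  induction Ls with
  | nil => rfl
  | cons L Ls ih => simp [sections, length_flatMap, ih, Nat.mul_comm]

theorem sections_ne_nil {Ls : List (List α)} (h : ∀ L ∈ Ls, L ≠ []) : Ls.sections ≠ [] := by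
  rw [← length_pos_iff, length_sections]
  exact prod_pos (by simpa [length_pos_iff] using h)

theorem filter_sections_all (Ls : List (List α)) (p : α → Bool) :
    Ls.sections.filter (·.all p) = (Ls.map (filter p)).sections := by
  induction Ls with
  | nil => rfl
  | cons L Ls ih =>
    simp only [sections, map_cons, ← ih, filter_flatMap, filter_map, Function.comp_def, all_cons]
    induction Ls.sections with
    | nil => rfl
    | cons s S ihS => cases hs : s.all p <;> simp [hs, ihS]

theorem countP_sections_all (Ls : List (List α)) (p : α → Bool) :
    Ls.sections.countP (·.all p) = (Ls.map (·.countP p)).prod := by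
  rw [countP_eq_length_filter, filter_sections_all, length_sections, map_map]
  simp [Function.comp_def, countP_eq_length_filter]

theorem freq_sections_all (Ls : List (List α)) (p : α → Bool) :
    Ls.sections.freq (·.all p) = (Ls.map (·.freq p)).prod := by
  rw [freq, countP_sections_all, length_sections, Nat.cast_list_prod, Nat.cast_list_prod,
    map_map, map_map]
  exact (Multiset.prod_map_div (m := (Ls : Multiset (List α)))).symm

theorem freq_sections_all_and_not_all (Ls : List (List α)) (p q : α → Bool) :
    Ls.sections.freq (fun l => l.all p && !l.all q)
      = (Ls.map (·.freq p)).prod - (Ls.map (·.freq fun x => p x && q x)).prod := by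
  rw [← freq_sections_all, ← freq_sections_all, eq_sub_iff_add_eq',
    ← freq_and_add_freq_and_not _ (fun l : List α => l.all p) (fun l => l.all q)]
  congr 1
  refine freq_congr fun l _ => ?_
  rw [Bool.eq_iff_iff]
  simp [forall_and]

end List

theorem one_half_pow_sub_pow_le {v : ℝ} (hv0 : 0 ≤ v) (hv1 : v ≤ 1 / 2) {m : ℕ} (hm : 2 ≤ m) :
    (1 / 2) ^ m - v ^ m ≤ 1 / 4 - v ^ 2 := by
  induction m, hm using Nat.le_induction with
  | base => norm_num
  | succ m hm ih =>
    obtain ⟨j, rfl⟩ := Nat.exists_eq_add_of_le' (by omega : 1 ≤ m)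
    have hvj : v ^ j ≤ (1 / 2) ^ j := pow_le_pow_left₀ hv0 hv1 j
    have hv : v * (1 - v) ≤ 1 / 4 := by nlinarith [sq_nonneg (v - 1 / 2)]
    have hstep : v ^ (j + 1) * (1 - v) ≤ (1 / 2) ^ (j + 1) / 2 := calc
      v ^ (j + 1) * (1 - v) = v ^ j * (v * (1 - v)) := by ring
      _ ≤ (1 / 2) ^ j * (1 / 4) := mul_le_mul hvj hv (by nlinarith) (by positivity)
      _ = (1 / 2) ^ (j + 1) / 2 := by ring
    calc (1 / 2) ^ (j + 1 + 1) - v ^ (j + 1 + 1)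
        = ((1 / 2) ^ (j + 1) - v ^ (j + 1)) - ((1 / 2) ^ (j + 1) / 2 - v ^ (j + 1) * (1 - v)) := by
          ring
      _ ≤ 1 / 4 - v ^ 2 := by linarith

theorem one_half_pow_sub_prod_mul_le {ι : Type*} {l : List ι} {p : ι → ℝ} {d : ℝ} (hd : 0 ≤ d)
    (hl : 2 ≤ l.length) (hp : ∀ i ∈ l, p i * (d + 2) ≤ 1) :
    ((1 / 2) ^ l.length - (l.map fun i => 1 / 2 - p i).prod) * (d + 3) ≤ 1 := by
  have hd2 : 0 < d + 2 := by linarith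
  set v : ℝ := 1 / 2 - 1 / (d + 2)
  have hv0 : 0 ≤ v := by
    rw [sub_nonneg]; exact one_div_le_one_div_of_le two_pos (by linarith)
  have hv1 : v ≤ 1 / 2 := by
    simp only [v]; linarith [one_div_nonneg.2 hd2.le]
  have hvp : ∀ i ∈ l, v ≤ 1 / 2 - p i := fun i hi => by
    have : p i ≤ 1 / (d + 2) := by rw [le_div_iff₀ hd2]; exact hp i hi
    simp only [v]; linarith
  have hprod : v ^ l.length ≤ (l.map fun i => 1 / 2 - p i).prod := by
    simpa using List.prod_map_le_prod_map₀ (fun _ => v) _ (fun _ _ => hv0) hvp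
  have hsq : (1 / 4 - v ^ 2) * (d + 3) ≤ 1 := by
    simp only [v]
    rw [← sub_nonneg]
    field_simp
    ring_nf
    positivity
  calc ((1 / 2) ^ l.length - (l.map fun i => 1 / 2 - p i).prod) * (d + 3)
      ≤ ((1 / 2) ^ l.length - v ^ l.length) * (d + 3) := by gcongr
    _ ≤ (1 / 4 - v ^ 2) * (d + 3) :=
      mul_le_mul_of_nonneg_right (one_half_pow_sub_pow_le hv0 hv1 hl) (by linarith)
    _ ≤ 1 := hsq

open List

theorem labellings_node (k : ℕ) (cs : List PTree) :
    labellings k (.node cs)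
      = (cs.map (labellings k)).sections.map (.node true)
        ++ (cs.map (labellings k)).sections.map (.node false) := by
  rw [labellings]
  simp

theorem LTree.eval_node {k : ℕ} (c : Bool) {l : List (LTree k)} (hl : l ≠ []) (x : Fin k → Bool) :
    (LTree.node c l).eval x = if c then l.all (·.eval x) else l.any (·.eval x) := by
  rw [LTree.eval]
  cases c <;> simp [hl, List.all_map, List.any_map, Function.comp_def]

theorem freq_labellings_node (k : ℕ) (cs : List PTree) (q : LTree k → Bool) :
    (labellings k (.node cs)).freq q
      = ((cs.map (labellings k)).sections.freq (fun l => q (.node true l))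
        + (cs.map (labellings k)).sections.freq (fun l => q (.node false l))) / 2 := by
  rw [labellings_node, freq_append_of_length_eq (by simp), freq_map, freq_map]
  rfl

theorem freq_labellings_leaf_eval {k : ℕ} (hk : 1 ≤ k) (x : Fin k → Bool) :
    (labellings k .leaf).freq (·.eval x) = 1 / 2 := by
  rw [labellings, freq, countP_flatMap, length_flatMap]
  have hpair : ∀ i, [LTree.leaf i true, LTree.leaf i false].countP (·.eval x) = 1 := by
    intro i
    cases h : x i <;> simp [LTree.eval, h]
  simp [Function.comp_def, hpair]
  field_simp

theorem PTree.satLevel_node (cs : List PTree) :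
    (PTree.node cs).satLevel = (cs.map PTree.satLevel).min?.getD 0 + 1 := by
  rw [PTree.satLevel]
  simp

theorem freq_labellings_node_of_ne_nil {k : ℕ} {cs : List PTree} (hcs : cs ≠ [])
    (q : ((Fin k → Bool) → Bool) → Bool) :
    (labellings k (.node cs)).freq (fun τ => q τ.eval)
      = ((cs.map (labellings k)).sections.freq (fun l => q fun x => l.all (·.eval x))
        + (cs.map (labellings k)).sections.freq (fun l => q fun x => l.any (·.eval x))) / 2 := by
  have hl : ∀ l ∈ (cs.map (labellings k)).sections, l ≠ [] := fun l hl => by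
    rw [← length_pos_iff, mem_sections_length hl, length_map]
    exact length_pos_iff.2 hcs
  rw [freq_labellings_node]
  congr 2 <;> refine freq_congr fun l hl' => ?_ <;> simp [funext (LTree.eval_node _ (hl l hl'))]

theorem freq_labellings_eval {k : ℕ} (hk : 1 ≤ k) {t : PTree} (ht : IsShape t)
    (x : Fin k → Bool) : (labellings k t).freq (·.eval x) = 1 / 2 := by
  induction ht with
  | leaf => exact freq_labellings_leaf_eval hk x
  | node cs hlen _ ih =>
    have hne : ∀ L ∈ cs.map (labellings k), L ≠ [] := by
      simp only [mem_map, forall_exists_index, and_imp, forall_apply_eq_imp_iff₂]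
      exact fun c hc => ne_nil_of_freq_ne_zero (p := (·.eval x)) (by rw [ih c hc]; norm_num)
    have hall : ((cs.map (labellings k)).map (·.freq (·.eval x))).prod = (1 / 2) ^ cs.length := by
      simp only [map_map, Function.comp_def]
      rw [map_congr_left (g := fun _ => 1 / 2) ih]
      simp
    have hall_not : ((cs.map (labellings k)).map (·.freq (!·.eval x))).prod
        = (1 / 2) ^ cs.length := by
      simp only [map_map, Function.comp_def]
      rw [map_congr_left (g := fun _ => 1 / 2) fun c hc => ?_]
      · simp
      · rw [freq_not (hne _ (mem_map_of_mem hc)), ih c hc]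
        norm_num
    rw [freq_labellings_node_of_ne_nil (ne_nil_of_length_pos (by omega)) (· x)]
    simp only [any_eq_not_all_not]
    rw [freq_not (sections_ne_nil hne), freq_sections_all, freq_sections_all, hall, hall_not]
    ring

theorem freq_labellings_node_eval_and_not {k : ℕ} (hk : 1 ≤ k) {cs : List PTree}
    (hcs : ∀ c ∈ cs, IsShape c) (hne : cs ≠ []) (a b : Fin k → Bool) :
    (labellings k (.node cs)).freq (fun τ => τ.eval a && !τ.eval b)
      = (1 / 2) ^ cs.length
        - (cs.map fun c => 1 / 2 - (labellings k c).freq fun τ => τ.eval a && !τ.eval b).prod := by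
  set p := fun c => (labellings k c).freq (fun τ => τ.eval a && !τ.eval b)
  have hA : ∀ c ∈ cs, (labellings k c).freq (·.eval a) = 1 / 2 :=
    fun c hc => freq_labellings_eval hk (hcs c hc) a
  have hnotB : ∀ c ∈ cs, (labellings k c).freq (!·.eval b) = 1 / 2 := fun c hc => by
    have hb := freq_labellings_eval hk (hcs c hc) b
    rw [freq_not (ne_nil_of_freq_ne_zero (by rw [hb]; norm_num)), hb]
    norm_num
  have hAB : ∀ c ∈ cs, (labellings k c).freq (fun τ => τ.eval a && τ.eval b) = 1 / 2 - p c :=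
    fun c hc => by
      linarith [freq_and_add_freq_and_not (labellings k c) (·.eval a) (·.eval b), hA c hc]
  have hnBnA : ∀ c ∈ cs,
      (labellings k c).freq (fun τ => !τ.eval b && !τ.eval a) = 1 / 2 - p c := fun c hc => by
    have h := freq_and_add_freq_and_not (labellings k c) (!·.eval b) (!·.eval a)
    have hcomm : (labellings k c).freq (fun τ => !τ.eval b && !!τ.eval a) = p c :=
      freq_congr fun τ _ => by rw [Bool.not_not, Bool.and_comm]
    linarith [hnotB c hc]
  -- De Morgan turns the `∨` case into the `∧` case for the pair `(!b, !a)`.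
  have hor : (cs.map (labellings k)).sections.freq
        (fun l => l.any (·.eval a) && !l.any (·.eval b))
      = (cs.map (labellings k)).sections.freq
        (fun l => l.all (!·.eval b) && !l.all (!·.eval a)) := freq_congr fun l _ => by
    rw [any_eq_not_all_not, any_eq_not_all_not, Bool.not_not, Bool.and_comm]
  rw [freq_labellings_node_of_ne_nil hne (fun f => f a && !f b), hor,
    freq_sections_all_and_not_all, freq_sections_all_and_not_all]
  simp only [map_map, Function.comp_def]
  rw [map_congr_left hA, map_congr_left hnotB, map_congr_left hAB, map_congr_left hnBnA]
  simp
  ring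

theorem freq_labellings_eval_and_not_mul_le {k : ℕ} (hk : 1 ≤ k) {t : PTree} (ht : IsShape t)
    (a b : Fin k → Bool) :
    (labellings k t).freq (fun τ => τ.eval a && !τ.eval b) * (t.satLevel + 2) ≤ 1 := by
  induction ht with
  | leaf =>
    have h := freq_and_add_freq_and_not (labellings k .leaf) (·.eval a) (·.eval b)
    rw [freq_labellings_leaf_eval hk] at h
    have := freq_nonneg (labellings k .leaf) (fun τ => τ.eval a && τ.eval b)
    rw [PTree.satLevel]
    push_cast
    linarith
  | node cs hlen hcs ih =>
    set d := (cs.map PTree.satLevel).min?.getD 0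
    rw [freq_labellings_node_eval_and_not hk hcs (ne_nil_of_length_pos (by omega)),
      PTree.satLevel_node]
    push_cast
    rw [show (d : ℝ) + 1 + 2 = d + 3 by ring]
    refine one_half_pow_sub_prod_mul_le d.cast_nonneg hlen fun c hc => ?_
    have hdc : (d : ℝ) ≤ c.satLevel := by exact_mod_cast min?_getD_le_of_mem (mem_map_of_mem hc)
    calc _ ≤ (labellings k c).freq (fun τ => τ.eval a && !τ.eval b) * (c.satLevel + 2) := by
          gcongr; exact freq_nonneg _ _
      _ ≤ 1 := ih c hc

theorem Pr_eq_freq (k : ℕ) (t : PTree) (s : Set ((Fin k → Bool) → Bool)) [DecidablePred (· ∈ s)] :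
    Pr k t s = (labellings k t).freq (fun τ => decide (τ.eval ∈ s)) := by
  rw [Pr, freq, countP_eq_length_filter]
  congr!

/-- For every `k ≥ 1` there is `σ₀ ≥ 1` such that for every
`σ ≥ σ₀`, every shape of saturation level at least `σ`, and all distinct
`a b : {True,False}^k`, the probability that the random labelling evaluates
to `True` at `a` and to `False` at `b` is at most `2/σ`. -/
theorem andor_two_point_bound (k : ℕ) (hk : 1 ≤ k) :
    ∃ σ₀ : ℕ, 1 ≤ σ₀ ∧ ∀ σ : ℕ, σ₀ ≤ σ → ∀ t : PTree, IsShape t →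
      σ ≤ t.satLevel → ∀ a b : Fin k → Bool, a ≠ b →
        Pr k t {g | g a = true ∧ g b = false} ≤ 2 / (σ : ℝ) := by
  refine ⟨1, le_rfl, fun σ hσ t ht hsat a b _ => ?_⟩
  have hPr : Pr k t {g | g a = true ∧ g b = false}
      = (labellings k t).freq (fun τ => τ.eval a && !τ.eval b) := by
    rw [Pr_eq_freq]
    exact freq_congr fun τ _ => by simp
  have hσ : (0 : ℝ) < σ := by exact_mod_cast hσ
  have hsatσ : (σ : ℝ) ≤ t.satLevel := by exact_mod_cast hsat
  rw [hPr, le_div_iff₀ hσ]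
  calc (labellings k t).freq (fun τ => τ.eval a && !τ.eval b) * σ
      ≤ (labellings k t).freq (fun τ => τ.eval a && !τ.eval b) * (t.satLevel + 2) := by
        gcongr
        · exact freq_nonneg _ _
        · linarith
    _ ≤ 2 := by linarith [freq_labellings_eval_and_not_mul_le hk ht a b]
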